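/- arXiv:quant-ph/0609234 — 2 statements merged into one kernel-verified Lean document; each statement's English description precedes it below -/
import Mathlib

section
/- Let n ≥ 3, let Γ be the dihedral group of order 2n, let x = r (the rotation generator, of order n) and y = s·r⁰ (a reflection). Then x·y⁻¹ = y·x⁻¹, and consequently for every real number φ the matrix W = (cos φ) • P_x + (i sin φ) • P_y is unitary; hence the Cayley graph of the dihedral group D_n with generating set {x, y} admits a homogeneous scalar quantum walk. -/
/-!
`g ↦ P_g` is an anti-homomorphism into the permutation matrices with `star P_g = P_{g⁻¹}`.
For `W = a P_x + b P_y` this gives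
`star W * W = (|a|² + |b|²) 1 + (conj a * b) P_{y x⁻¹} + (conj b * a) P_{x y⁻¹}`,
so once `x y⁻¹ = y x⁻¹` the cross terms combine into `2 Re (conj a * b) P_{x y⁻¹}`,
which vanishes for `a = cos φ`, `b = i sin φ`.
-/

/-- The permutation matrix of right multiplication by `g`:
`(P_g)_{v,w} = 1` if `v = w * g` and `0` otherwise. -/
def rightMulMatrix {Γ : Type*} [Group Γ] [DecidableEq Γ] (g : Γ) : Matrix Γ Γ ℂ :=
  fun v w => if v = w * g then 1 else 0

section rightMulMatrix

variable {Γ : Type*} [Group Γ] [DecidableEq Γ]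

theorem rightMulMatrix_one : rightMulMatrix (1 : Γ) = 1 := by
  ext v w
  simp [rightMulMatrix, Matrix.one_apply]

theorem star_rightMulMatrix (g : Γ) : star (rightMulMatrix g) = rightMulMatrix g⁻¹ := by
  ext v w
  simp only [Matrix.star_apply, rightMulMatrix, eq_mul_inv_iff_mul_eq, eq_comm (a := w)]
  split_ifs <;> simp

variable [Fintype Γ]

theorem rightMulMatrix_mul (g h : Γ) :
    rightMulMatrix g * rightMulMatrix h = rightMulMatrix (h * g) := by
  ext v w
  rw [Matrix.mul_apply, Finset.sum_eq_single (w * h)]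
  · simp [rightMulMatrix, mul_assoc]
  · intro u _ hu
    simp [rightMulMatrix, hu]
  · simp

theorem star_smul_add_smul_rightMulMatrix_mul_self {x y : Γ} (hxy : x * y⁻¹ = y * x⁻¹)
    (a b : ℂ) :
    star (a • rightMulMatrix x + b • rightMulMatrix y) *
        (a • rightMulMatrix x + b • rightMulMatrix y) =
      (star a * a + star b * b) • 1 + (star a * b + star b * a) • rightMulMatrix (x * y⁻¹) := by
  simp only [star_add, star_smul, star_rightMulMatrix, Matrix.add_mul, Matrix.mul_add,
    Matrix.smul_mul, Matrix.mul_smul, rightMulMatrix_mul, mul_inv_cancel, rightMulMatrix_one,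
    ← hxy]
  module

theorem smul_add_smul_rightMulMatrix_mem_unitaryGroup {x y : Γ} (hxy : x * y⁻¹ = y * x⁻¹)
    {a b : ℂ} (hnorm : star a * a + star b * b = 1) (hcross : star a * b + star b * a = 0) :
    a • rightMulMatrix x + b • rightMulMatrix y ∈ Matrix.unitaryGroup Γ ℂ := by
  rw [Matrix.mem_unitaryGroup_iff', star_smul_add_smul_rightMulMatrix_mul_self hxy, hnorm,
    hcross, one_smul, zero_smul, add_zero]

theorem cos_smul_add_I_sin_smul_rightMulMatrix_mem_unitaryGroup {x y : Γ}
    (hxy : x * y⁻¹ = y * x⁻¹) (φ : ℝ) :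
    (Real.cos φ : ℂ) • rightMulMatrix x + (Complex.I * Real.sin φ) • rightMulMatrix y ∈
      Matrix.unitaryGroup Γ ℂ := by
  refine smul_add_smul_rightMulMatrix_mem_unitaryGroup hxy ?_ ?_
  · have hpyth : (Real.cos φ : ℂ) ^ 2 + (Real.sin φ : ℂ) ^ 2 = 1 := by
      exact_mod_cast Real.cos_sq_add_sin_sq φ
    simp only [Complex.star_def, map_mul, Complex.conj_ofReal, Complex.conj_I]
    linear_combination hpyth - (Real.sin φ : ℂ) ^ 2 * Complex.I_sq
  · simp only [Complex.star_def, map_mul, Complex.conj_ofReal, Complex.conj_I]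
    ring

end rightMulMatrix

theorem DihedralGroup.r_mul_inv_sr {n : ℕ} (i j : ZMod n) :
    r i * (sr j)⁻¹ = sr j * (r i)⁻¹ := by
  rw [inv_sr, inv_r, r_mul_sr, sr_mul_r, sub_eq_add_neg]

theorem dihedral_walk_general (n : ℕ) [NeZero n] :
    (DihedralGroup.r 1 * (DihedralGroup.sr 0 : DihedralGroup n)⁻¹ =
      DihedralGroup.sr 0 * (DihedralGroup.r 1 : DihedralGroup n)⁻¹) ∧
    ∀ φ : ℝ,
      ((Real.cos φ : ℂ) • rightMulMatrix (DihedralGroup.r 1 : DihedralGroup n) +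
        (Complex.I * Real.sin φ) •
          rightMulMatrix (DihedralGroup.sr 0 : DihedralGroup n)) ∈
        Matrix.unitaryGroup (DihedralGroup n) ℂ :=
  have hxy := DihedralGroup.r_mul_inv_sr (n := n) 1 0
  ⟨hxy, cos_smul_add_I_sin_smul_rightMulMatrix_mem_unitaryGroup hxy⟩

/-- In the dihedral group `D_n` (`n ≥ 3`) with `x = r` the rotation generator and
`y = s r⁰` a reflection, we have `x y⁻¹ = y x⁻¹`, and for every `φ` the matrix
`W = (cos φ) • P_x + (i sin φ) • P_y` is unitary: the Cayley graph of `D_n` with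
generating set `{x, y}` admits a homogeneous scalar quantum walk. -/
theorem dihedral_walk (n : ℕ) [NeZero n] (hn : 3 ≤ n) :
    (DihedralGroup.r 1 * (DihedralGroup.sr 0 : DihedralGroup n)⁻¹ =
      DihedralGroup.sr 0 * (DihedralGroup.r 1 : DihedralGroup n)⁻¹) ∧
    ∀ φ : ℝ,
      ((Real.cos φ : ℂ) • rightMulMatrix (DihedralGroup.r 1 : DihedralGroup n) +
        (Complex.I * Real.sin φ) •
          rightMulMatrix (DihedralGroup.sr 0 : DihedralGroup n)) ∈
        Matrix.unitaryGroup (DihedralGroup n) ℂ :=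
  dihedral_walk_general n
end

section
/- Let Γ = ℤ/4ℤ with generating set Δ = {1, 2, 3}, whose Cayley graph is the complete graph on 4 vertices. Then for every real number φ and every sign ε ∈ {+1, −1}, the matrix W = ((1 + iε)/2) sin φ • P_1 + (cos φ) • P_2 + (−((1 − iε)/2) sin φ) • P_3 is unitary. Hence the complete graph over four vertices admits a homogeneous scalar quantum walk. -/
/-- The permutation matrix of right translation by `g` in an additive group:
`(P_g)_{v,w} = 1` if `v = w + g` and `0` otherwise. -/
def rightAddMatrix {Γ : Type*} [AddGroup Γ] [DecidableEq Γ] (g : Γ) : Matrix Γ Γ ℂ :=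
  fun v w => if v = w + g then 1 else 0

lemma rightAddMatrix_mul {Γ : Type*} [AddCommGroup Γ] [DecidableEq Γ] [Fintype Γ] (g h : Γ) :
    rightAddMatrix g * rightAddMatrix h = rightAddMatrix (g + h) := by
  ext v w
  simp only [Matrix.mul_apply, rightAddMatrix, mul_ite, mul_one, mul_zero,
    Finset.sum_ite_eq', Finset.mem_univ, if_true]
  congr 1
  rw [add_comm g h, ← add_assoc]

lemma rightAddMatrix_star {Γ : Type*} [AddCommGroup Γ] [DecidableEq Γ] (g : Γ) :
    star (rightAddMatrix g) = rightAddMatrix (-g) := by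
  ext v w
  rw [Matrix.star_apply]
  by_cases h : v = w + -g
  · subst h; simp [rightAddMatrix]
  · have h2 : w ≠ v + g := fun hw => h (by subst hw; simp)
    simp [rightAddMatrix, h, h2]

lemma rightAddMatrix_zero {Γ : Type*} [AddCommGroup Γ] [DecidableEq Γ] :
    rightAddMatrix (0 : Γ) = 1 := by
  ext v w
  simp [rightAddMatrix, Matrix.one_apply, eq_comm]

/-- On `ℤ/4ℤ` with generating set `{1, 2, 3}` (whose Cayley graph is the complete
graph on 4 vertices), the matrix
`W = ((1 + iε)/2) sin φ • P₁ + (cos φ) • P₂ + (−((1 − iε)/2) sin φ) • P₃`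
is unitary for every real `φ` and sign `ε ∈ {+1, −1}`: the complete graph over
four vertices admits a homogeneous scalar quantum walk. -/
theorem complete_graph_four_walk (φ ε : ℝ) (hε : ε = 1 ∨ ε = -1) :
    (((1 + Complex.I * ε) / 2 * Real.sin φ) • rightAddMatrix (1 : ZMod 4)
      + (Real.cos φ : ℂ) • rightAddMatrix (2 : ZMod 4)
      + (-((1 - Complex.I * ε) / 2) * Real.sin φ) • rightAddMatrix (3 : ZMod 4)) ∈
      Matrix.unitaryGroup (ZMod 4) ℂ := by
  set s : ℂ := (Real.sin φ : ℂ) with hsdef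
  set co : ℂ := (Real.cos φ : ℂ) with hcdef
  have hε2 : (ε : ℂ)^2 = 1 := by obtain rfl | rfl := hε <;> norm_num
  have hI : Complex.I ^ 2 = -1 := Complex.I_sq
  have hs : s^2 + co^2 = 1 := by
    rw [hsdef, hcdef]
    exact_mod_cast congrArg (Complex.ofReal) (Real.sin_sq_add_cos_sq φ)
  have hss : star s = s := by rw [hsdef]; exact Complex.conj_ofReal _
  have hsco : star co = co := by rw [hcdef]; exact Complex.conj_ofReal _
  have hsa : star ((1 + Complex.I * ε) / 2 * s)
      = (1 - Complex.I * ε) / 2 * s := by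
    simp only [star_mul', star_div₀, star_add, star_one, star_ofNat,
      Complex.star_def, Complex.conj_I] at *
    rw [hss, Complex.conj_ofReal]; ring
  have hsc : star (-((1 - Complex.I * ε) / 2) * s)
      = -((1 + Complex.I * ε) / 2) * s := by
    simp only [star_mul', star_neg, star_div₀, star_sub, star_one, star_ofNat,
      Complex.star_def, Complex.conj_I] at *
    rw [hss, Complex.conj_ofReal]; ring
  rw [Matrix.mem_unitaryGroup_iff]
  rw [star_add, star_add, star_smul, star_smul, star_smul,
    rightAddMatrix_star, rightAddMatrix_star, rightAddMatrix_star, hsa, hsco, hsc]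
  rw [show (-(1 : ZMod 4)) = 3 by decide, show (-(2 : ZMod 4)) = 2 by decide,
    show (-(3 : ZMod 4)) = 1 by decide]
  rw [add_mul, add_mul, mul_add, mul_add, mul_add, mul_add, mul_add, mul_add]
  simp only [Matrix.smul_mul, Matrix.mul_smul, rightAddMatrix_mul, smul_smul]
  rw [show ((1 : ZMod 4) + 3) = 0 by decide, show ((1 : ZMod 4) + 2) = 3 by decide,
    show ((1 : ZMod 4) + 1) = 2 by decide, show ((2 : ZMod 4) + 3) = 1 by decide,
    show ((2 : ZMod 4) + 2) = 0 by decide, show ((2 : ZMod 4) + 1) = 3 by decide,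
    show ((3 : ZMod 4) + 3) = 2 by decide, show ((3 : ZMod 4) + 2) = 1 by decide,
    show ((3 : ZMod 4) + 1) = 0 by decide]
  rw [← rightAddMatrix_zero (Γ := ZMod 4)]
  match_scalars
  · linear_combination hs - (s^2/2*(ε:ℂ)^2) * hI + (s^2/2) * hε2
  · ring
  · linear_combination -(s^2/2*(ε:ℂ)^2) * hI + (s^2/2) * hε2
  · ring
end
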